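/- Let (F,μ) be an RDS of continuous maps on a compact metric space (M,D) satisfying properties (P) and (LC), and let ν be the unique μ-stationary probability measure on M. If every map in F is injective, then the following dichotomy holds: either ν is a Dirac measure δ_{x₀} at a point x₀ ∈ M which is a fixed point of f for μ-almost every f ∈ F, or ν has no atoms. -/

import Mathlib

open MeasureTheory Topology Filter

noncomputable section

/-- `rdsIter i n` is the composition `i (n-1) ∘ ⋯ ∘ i 0`, i.e. the random orbit map `f_i^n`. -/
def rdsIter {M : Type*} [TopologicalSpace M] (i : ℕ → C(M, M)) : ℕ → M → M
  | 0, x => x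
  | n + 1, x => i n (rdsIter i n x)

/-- `P` is the infinite product of copies of `μ` (the measure `μ^ℕ`). -/
def IsProductMeasure {Ω : Type*} [MeasurableSpace Ω] (μ : Measure Ω)
    (P : Measure (ℕ → Ω)) : Prop :=
  IsProbabilityMeasure P ∧
    ∀ (n : ℕ) (s : Fin n → Set Ω), (∀ k, MeasurableSet (s k)) →
      P {ω | ∀ k : Fin n, ω (k : ℕ) ∈ s k} = ∏ k : Fin n, μ (s k)

/-- The topological support of a measure. -/
def measSupp {Ω : Type*} [TopologicalSpace Ω] [MeasurableSpace Ω] (μ : Measure Ω) : Set Ω :=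
  {f | ∀ U : Set Ω, IsOpen U → f ∈ U → 0 < μ U}

/-- Property (P): proximality (of `F = supp μ`). -/
def PropP {M : Type*} [MetricSpace M] [CompactSpace M] [MeasurableSpace C(M, M)]
    (μ : Measure C(M, M)) : Prop :=
  ∀ x y : M, ∃ i : ℕ → C(M, M), (∀ n, i n ∈ measSupp μ) ∧
    ∃ φ : ℕ → ℕ, StrictMono φ ∧
      Tendsto (fun k => dist (rdsIter i (φ k) x) (rdsIter i (φ k) y)) atTop (𝓝 0)

/-- Property (LC): local contraction with rate `q`. -/
def PropLC {M : Type*} [MetricSpace M] [CompactSpace M] [MeasurableSpace C(M, M)]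
    (P : Measure (ℕ → C(M, M))) (q : ℝ) : Prop :=
  ∀ x : M, ∀ᵐ i ∂P, ∃ B ∈ 𝓝 x, ∀ n : ℕ, Metric.diam (rdsIter i n '' B) ≤ q ^ n

/-- `ν` is a `μ`-stationary measure. -/
def IsStationaryRDS {M : Type*} [MetricSpace M] [CompactSpace M] [MeasurableSpace M]
    [MeasurableSpace C(M, M)] (μ : Measure C(M, M)) (ν : Measure M) : Prop :=
  ∀ A : Set M, MeasurableSet A → ν A = ∫⁻ f, ν (⇑f ⁻¹' A) ∂μ

/-! If `ν` has atoms, those of maximal mass form a finite set `S`. Stationarity and injectivity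
force almost every map, hence every map of `F`, to permute `S`, and proximality collapses `S` to
a single common fixed point `x₀`. The restriction of `ν` to `{x₀}ᶜ` is again stationary. By (LC)
a set of paths of positive probability contracts a ball around `x₀` onto `x₀`, while proximality
and the invariance of supports put mass into every ball around `x₀`; so a nonzero stationary
measure charges `x₀`, and `ν` has no mass off `x₀`. -/

open Set Function Metric
open scoped ENNReal

section Iterates

variable {M : Type*} [TopologicalSpace M]

theorem rdsIter_succ' (i : ℕ → C(M, M)) (n : ℕ) (x : M) :
    rdsIter i (n + 1) x = rdsIter (fun k => i (k + 1)) n (i 0 x) := by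
  induction n with
  | zero => rfl
  | succ n ih => exact congrArg (i (n + 1)) ih

theorem rdsIter_mapsTo {i : ℕ → C(M, M)} {S : Set M} (hS : ∀ n, MapsTo (i n) S S) (n : ℕ) :
    MapsTo (rdsIter i n) S S := by
  induction n with
  | zero => exact mapsTo_id S
  | succ n ih => exact (hS n).comp ih

theorem rdsIter_injective {i : ℕ → C(M, M)} (hi : ∀ n, Injective (i n)) (n : ℕ) :
    Injective (rdsIter i n) := by
  induction n with
  | zero => exact injective_id
  | succ n ih => exact (hi n).comp ih

theorem rdsIter_eq_self {i : ℕ → C(M, M)} {x : M} (hx : ∀ n, i n x = x) (n : ℕ) :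
    rdsIter i n x = x :=
  rdsIter_mapsTo (fun n => mapsTo_singleton.2 (hx n)) n rfl

theorem continuous_rdsIter [LocallyCompactSpace M] (n : ℕ) :
    Continuous fun p : (ℕ → C(M, M)) × M => rdsIter p.1 n p.2 := by
  induction n with
  | zero => exact continuous_snd
  | succ n ih => exact continuous_eval.comp (((continuous_apply n).comp continuous_fst).prodMk ih)

end Iterates

section Support

variable {Ω : Type*} [TopologicalSpace Ω] [MeasurableSpace Ω]

theorem measSupp_eq_support (ρ : Measure Ω) : measSupp ρ = ρ.support := by
  rw [Measure.support_eq_forall_isOpen]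
  exact Set.ext fun x => forall_congr' fun U => forall_comm

theorem measure_pos_of_mem_measSupp {ρ : Measure Ω} {f : Ω} {V : Set Ω} (hf : f ∈ measSupp ρ)
    (hV : V ∈ 𝓝 f) : 0 < ρ V := by
  rw [measSupp_eq_support] at hf
  exact Measure.mem_support_iff_forall f |>.1 hf V hV

theorem ae_mem_measSupp [HereditarilyLindelofSpace Ω] (ρ : Measure Ω) :
    ∀ᵐ f ∂ρ, f ∈ measSupp ρ := by
  rw [measSupp_eq_support]
  exact Measure.support_mem_ae

end Support

namespace IsProductMeasure

variable {Ω : Type*} [MeasurableSpace Ω] {μ : Measure Ω} {P : Measure (ℕ → Ω)}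

theorem measure_pi [IsProbabilityMeasure μ] (hP : IsProductMeasure μ P) (s : Finset ℕ)
    {t : ℕ → Set Ω} (ht : ∀ k, MeasurableSet (t k)) :
    P ((s : Set ℕ).pi t) = ∏ k ∈ s, μ (t k) := by
  classical
  set n := s.sup id + 1
  have hlt : ∀ k ∈ s, k < n := fun k hk => Nat.lt_succ_of_le (Finset.le_sup (f := id) hk)
  let t' : Fin n → Set Ω := fun k => if (k : ℕ) ∈ s then t k else univ
  have hbox : (s : Set ℕ).pi t = {ω : ℕ → Ω | ∀ k : Fin n, ω k ∈ t' k} := by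
    ext ω
    refine ⟨fun h k => ?_, fun h k hk => ?_⟩
    · dsimp only [t']
      split_ifs with hk
      exacts [h k hk, trivial]
    · have hk' : ω k ∈ t' ⟨k, hlt k hk⟩ := h _
      rwa [show t' ⟨k, hlt k hk⟩ = t k from if_pos hk] at hk'
  rw [hbox, hP.2 n t' fun k => by dsimp only [t']; split_ifs; exacts [ht _, .univ]]
  have hμ : ∀ k : Fin n, μ (t' k) = if (k : ℕ) ∈ s then μ (t k) else 1 := fun k => by
    dsimp only [t']; split_ifs <;> simp
  simp_rw [hμ]
  rw [Fin.prod_univ_eq_prod_range (fun k => if k ∈ s then μ (t k) else 1) n,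
    Finset.prod_ite_mem, Finset.inter_eq_right.2 fun k hk => Finset.mem_range.2 (hlt k hk)]

theorem ae_forall_apply_mem [IsProbabilityMeasure μ] (hP : IsProductMeasure μ P) {G : Set Ω}
    (hG : MeasurableSet G) (hμG : ∀ᵐ f ∂μ, f ∈ G) : ∀ᵐ i ∂P, ∀ n, i n ∈ G := by
  refine ae_all_iff.2 fun n => ae_iff.2 ?_
  have := hP.measure_pi {n} (t := fun _ => Gᶜ) fun _ => hG.compl
  rw [Finset.coe_singleton, singleton_pi, Finset.prod_singleton] at this
  exact this.trans (ae_iff.1 hμG)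

theorem map_head_tail [IsProbabilityMeasure μ] (hP : IsProductMeasure μ P) :
    P.map (fun i => (i 0, fun k => i (k + 1))) = μ.prod P := by
  classical
  have := hP.1
  have hmeas : Measurable fun i : ℕ → Ω => (i 0, fun k => i (k + 1)) :=
    (measurable_pi_apply 0).prodMk (measurable_pi_lambda _ fun k => measurable_pi_apply (k + 1))
  have hgen : (inferInstance : MeasurableSpace (Ω × (ℕ → Ω))) = MeasurableSpace.generateFrom
      (image2 (· ×ˢ ·) {s : Set Ω | MeasurableSet s}
        (squareCylinders fun _ : ℕ => {s : Set Ω | MeasurableSet s})) :=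
    (generateFrom_eq_prod MeasurableSpace.generateFrom_measurableSet generateFrom_squareCylinders
      isCountablySpanning_measurableSet
      ⟨fun _ => univ, fun _ => ⟨∅, fun _ => univ, by simp, by simp⟩, iUnion_const _⟩).symm
  refine ext_of_generate_finite _ hgen
    (MeasurableSpace.isPiSystem_measurableSet.prod
      (isPiSystem_squareCylinders (fun _ => MeasurableSpace.isPiSystem_measurableSet)
        fun _ => .univ)) ?_ (by rw [Measure.map_apply hmeas .univ]; simp)
  rintro _ ⟨u, hu, _, ⟨s, t, ht, rfl⟩, rfl⟩
  replace ht : ∀ k, MeasurableSet (t k) := fun k => ht k (mem_univ k)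
  rw [Measure.map_apply hmeas (hu.prod (.pi (Finset.countable_toSet _) fun k _ => ht k)),
    Measure.prod_prod]
  have hpre : (fun i : ℕ → Ω => (i 0, fun k => i (k + 1))) ⁻¹' (u ×ˢ (s : Set ℕ).pi t)
      = ((insert 0 (s.image Nat.succ) : Finset ℕ) : Set ℕ).pi
          (fun k => Nat.casesOn k u fun j => t j) := by
    ext i
    simp only [mem_preimage, mem_prod, Set.mem_pi, Finset.coe_insert, mem_insert_iff,
      Finset.mem_coe, Finset.mem_image, forall_eq_or_imp, forall_exists_index, and_imp,
      forall_apply_eq_imp_iff₂]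
    rfl
  rw [hpre, hP.measure_pi _ fun k => by cases k; exacts [hu, ht _], Finset.prod_insert (by simp),
    Finset.prod_image fun a _ b _ h => Nat.succ_injective h, hP.measure_pi s ht]
  rfl

end IsProductMeasure

section Atoms

variable {α : Type*} [MeasurableSpace α] [MeasurableSingletonClass α] (ν : Measure α)
  [IsFiniteMeasure ν]

theorem finite_setOf_le_measure_singleton {ε : ℝ≥0∞} (hε : ε ≠ 0) : {x | ε ≤ ν {x}}.Finite :=
  Measure.finite_const_le_meas_of_disjoint_iUnion ν (pos_iff_ne_zero.2 hε) measurableSet_singleton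
    (fun _ _ hxy => disjoint_singleton.2 hxy) (measure_ne_top ν _)

theorem exists_measure_singleton_isMax (h : ∃ x, ν {x} ≠ 0) :
    ∃ x₀, ν {x₀} ≠ 0 ∧ ∀ y, ν {y} ≤ ν {x₀} := by
  obtain ⟨a, ha⟩ := h
  obtain ⟨x₀, hx₀, hmax⟩ := exists_max_image _ (fun x => ν {x})
    (finite_setOf_le_measure_singleton ν ha) ⟨a, (le_rfl : ν {a} ≤ ν {a})⟩
  refine ⟨x₀, (pos_iff_ne_zero.2 ha |>.trans_le hx₀).ne', fun y => ?_⟩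
  by_cases hy : ν {a} ≤ ν {y}
  · exact hmax y hy
  · exact (not_le.1 hy).le.trans hx₀

end Atoms

section Proximality

variable {M : Type*} [MetricSpace M] [CompactSpace M] [MeasurableSpace C(M, M)]

theorem PropP.subsingleton_of_mapsTo {μ : Measure C(M, M)} (hProx : PropP μ) {S : Set M}
    (hS : S.Finite) (hmaps : ∀ f ∈ measSupp μ, MapsTo f S S)
    (hinj : ∀ f ∈ measSupp μ, Injective f) : S.Subsingleton := by
  intro x hx y hy
  by_contra hxy
  obtain ⟨i, hi, φ, -, hlim⟩ := hProx x y
  let D : Set ℝ := (fun p : M × M => dist p.1 p.2) '' (S ×ˢ S ∩ {p | p.1 ≠ p.2})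
  have hD : IsClosed D := (((hS.prod hS).inter_of_left _).image _).isClosed
  have hmem : ∀ n, dist (rdsIter i n x) (rdsIter i n y) ∈ D := fun n =>
    ⟨(_, _), ⟨⟨rdsIter_mapsTo (fun k => hmaps _ (hi k)) n hx,
      rdsIter_mapsTo (fun k => hmaps _ (hi k)) n hy⟩,
      (rdsIter_injective (fun k => hinj _ (hi k)) n).ne hxy⟩, rfl⟩
  obtain ⟨_, ⟨-, hab⟩, h0⟩ := hD.mem_of_tendsto hlim (Eventually.of_forall fun k => hmem (φ k))
  exact hab (dist_eq_zero.1 h0)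

end Proximality

def contractingPaths {M : Type*} [MetricSpace M] (x₀ : M) (q ε : ℝ) : Set (ℕ → C(M, M)) :=
  {i | ∀ n, MapsTo (rdsIter i n) (closedBall x₀ ε) (closedBall x₀ (q ^ n))}

theorem isClosed_contractingPaths {M : Type*} [MetricSpace M] [LocallyCompactSpace M] (x₀ : M)
    (q ε : ℝ) : IsClosed (contractingPaths x₀ q ε) := by
  simp only [contractingPaths, MapsTo, ofPred_forall]
  exact isClosed_iInter fun n => isClosed_iInter fun y => isClosed_iInter fun _ =>
    isClosed_closedBall.preimage ((continuous_rdsIter n).comp (Continuous.prodMk_left y))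

theorem PropLC.exists_measure_contractingPaths_ne_zero {M : Type*} [MetricSpace M]
    [CompactSpace M] [MeasurableSpace C(M, M)] [BorelSpace C(M, M)] {μ : Measure C(M, M)}
    [IsProbabilityMeasure μ] {P : Measure (ℕ → C(M, M))} (hP : IsProductMeasure μ P) {q : ℝ}
    (hLC : PropLC P q) {x₀ : M} (hfix : ∀ᵐ f : C(M, M) ∂μ, f x₀ = x₀) :
    ∃ ε > 0, P (contractingPaths x₀ q ε) ≠ 0 := by
  have := hP.1
  have hae : ∀ᵐ i ∂P, ∃ k : ℕ, i ∈ contractingPaths x₀ q (1 / (k + 1)) := by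
    filter_upwards [hLC x₀, hP.ae_forall_apply_mem (G := {f | f x₀ = x₀})
      (isClosed_eq (continuous_eval_const x₀) continuous_const).measurableSet hfix]
      with i ⟨B, hB, hdiam⟩ hi
    obtain ⟨r, hr, hrB⟩ := Metric.mem_nhds_iff.1 hB
    obtain ⟨k, hk⟩ := exists_nat_one_div_lt hr
    refine ⟨k, fun n y hy => ?_⟩
    calc dist (rdsIter i n y) x₀ = dist (rdsIter i n y) (rdsIter i n x₀) := by
          rw [rdsIter_eq_self hi]
      _ ≤ diam (rdsIter i n '' B) := dist_le_diam_of_mem isBounded_of_compactSpace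
          (mem_image_of_mem _ (hrB (closedBall_subset_ball hk hy)))
          (mem_image_of_mem _ (mem_of_mem_nhds hB))
      _ ≤ q ^ n := hdiam n
  by_contra! h
  obtain ⟨i, ⟨k, hk⟩, hi⟩ := (hae.and (ae_all_iff.2 fun k : ℕ =>
    measure_eq_zero_iff_ae_notMem.1 (h _ Nat.one_div_pos_of_nat))).exists
  exact hi k hk

namespace IsStationaryRDS

variable {M : Type*} [MetricSpace M] [CompactSpace M] [MeasurableSpace M] [BorelSpace M]
  [MeasurableSpace C(M, M)] {μ : Measure C(M, M)} {ρ : Measure M}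

theorem restrict_compl_singleton (hρ : IsStationaryRDS μ ρ) {x₀ : M}
    (hfix : ∀ᵐ f : C(M, M) ∂μ, Injective f ∧ f x₀ = x₀) :
    IsStationaryRDS μ (ρ.restrict {x₀}ᶜ) := by
  intro A hA
  rw [Measure.restrict_apply hA, hρ _ (hA.inter (measurableSet_singleton x₀).compl)]
  refine lintegral_congr_ae (hfix.mono fun f ⟨hinj, hfx⟩ => ?_)
  have hpre : f ⁻¹' {x₀} = {x₀} :=
    Set.ext fun y => ⟨fun h => hinj (h.trans hfx.symm), fun h => h ▸ hfx⟩
  dsimp only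
  rw [Measure.restrict_apply (hA.preimage f.continuous.measurable), preimage_inter,
    preimage_compl, hpre]

theorem ae_exists_preimage_of_isMax [IsProbabilityMeasure μ] [IsFiniteMeasure ρ]
    (hρ : IsStationaryRDS μ ρ) (hinj : ∀ᵐ f : C(M, M) ∂μ, Injective f) {x : M} (hx : ρ {x} ≠ 0)
    (hmax : ∀ y, ρ {y} ≤ ρ {x}) : ∀ᵐ f : C(M, M) ∂μ, ∃ y, f y = x ∧ ρ {y} = ρ {x} := by
  have hle : ∀ᵐ f : C(M, M) ∂μ, ρ (f ⁻¹' {x}) ≤ ρ {x} := hinj.mono fun f hf => by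
    have hsub : (f ⁻¹' {x}).Subsingleton := fun y hy z hz => hf (hy.trans hz.symm)
    rcases hsub.eq_empty_or_singleton with h | ⟨y, h⟩
    · simp [h]
    · exact h ▸ hmax y
  have heq : ∀ᵐ f : C(M, M) ∂μ, ρ (f ⁻¹' {x}) = ρ {x} := by
    refine ae_eq_of_ae_le_of_lintegral_le hle ?_ aemeasurable_const ?_ <;>
      rw [← hρ _ (measurableSet_singleton x)]
    · exact measure_ne_top ρ _
    · rw [lintegral_const, measure_univ, mul_one]
  filter_upwards [heq, hinj] with f hfx hf
  obtain ⟨y, hy⟩ := nonempty_of_measure_ne_zero (hfx ▸ hx)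
  have hpre : f ⁻¹' {x} = {y} :=
    eq_singleton_iff_unique_mem.2 ⟨hy, fun z hz => hf (hz.trans hy.symm)⟩
  exact ⟨y, hy, hpre ▸ hfx⟩

theorem exists_fixedPoint_of_atom [IsProbabilityMeasure μ] [IsFiniteMeasure ρ]
    (hρ : IsStationaryRDS μ ρ) (hProx : PropP μ) (hinj : ∀ f ∈ measSupp μ, Injective f)
    (hatom : ∃ x, ρ {x} ≠ 0) : ∃ x₀, ∀ f ∈ measSupp μ, f x₀ = x₀ := by
  obtain ⟨x₀, hx₀, hmax⟩ := exists_measure_singleton_isMax ρ hatom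
  let S := {x | ρ {x} = ρ {x₀}}
  have hS : S.Finite := (finite_setOf_le_measure_singleton ρ hx₀).subset fun x hx => hx.ge
  have hae : ∀ᵐ f : C(M, M) ∂μ, S ⊆ f '' S := by
    refine (ae_ball_iff hS.countable).2 fun x hx => ?_
    refine (hρ.ae_exists_preimage_of_isMax ((ae_mem_measSupp μ).mono hinj) (hx ▸ hx₀)
      fun y => hx ▸ hmax y).mono fun f ⟨y, hyx, hy⟩ => ⟨y, hy.trans hx, hyx⟩
  have hclosed : IsClosed {f : C(M, M) | S ⊆ f '' S} := by
    have : {f : C(M, M) | S ⊆ f '' S} = ⋂ x ∈ S, ⋃ y ∈ S, {f | f y = x} := by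
      ext f
      simp [subset_def]
    rw [this]
    exact isClosed_biInter fun x _ => hS.isClosed_biUnion fun y _ =>
      isClosed_eq (continuous_eval_const y) continuous_const
  have hmaps : ∀ f ∈ measSupp μ, MapsTo f S S := by
    intro f hf y hy
    have hsurj : S ⊆ f '' S :=
      (measSupp_eq_support μ ▸ Measure.support_subset_of_isClosed hclosed hae) hf
    have himg : S = f '' S := eq_of_subset_of_ncard_le hsurj
      (ncard_image_of_injective S (hinj f hf)).le (hS.image f)
    rw [himg]
    exact mem_image_of_mem f hy
  have hx₀S : x₀ ∈ S := rfl
  exact ⟨x₀, fun f hf => hProx.subsingleton_of_mapsTo hS hmaps hinj (hmaps f hf hx₀S) hx₀S⟩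

variable [BorelSpace C(M, M)]

theorem measurable_measure_preimage (ρ : Measure M) [IsFiniteMeasure ρ] {A : Set M}
    (hA : MeasurableSet A) : Measurable fun f : C(M, M) => ρ (f ⁻¹' A) :=
  measurable_measure_prodMk_left (continuous_eval.measurable hA)

theorem lintegral_rdsIter [IsProbabilityMeasure μ] [IsFiniteMeasure ρ]
    (hρ : IsStationaryRDS μ ρ) {P : Measure (ℕ → C(M, M))} (hP : IsProductMeasure μ P)
    {A : Set M} (hA : MeasurableSet A) (n : ℕ) :
    ∫⁻ i, ρ (rdsIter i n ⁻¹' A) ∂P = ρ A := by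
  have := hP.1
  induction n with
  | zero => simp [rdsIter]
  | succ n ih =>
    let G : C(M, M) × (ℕ → C(M, M)) → ℝ≥0∞ := fun p => ρ (p.1 ⁻¹' (rdsIter p.2 n ⁻¹' A))
    have hG : Measurable G := by
      have h : Continuous fun q : (C(M, M) × (ℕ → C(M, M))) × M => rdsIter q.1.2 n (q.1.1 q.2) :=
        (continuous_rdsIter n).comp ((continuous_snd.comp continuous_fst).prodMk
          (continuous_eval.comp ((continuous_fst.comp continuous_fst).prodMk continuous_snd)))
      exact measurable_measure_prodMk_left (h.measurable hA)
    calc ∫⁻ i, ρ (rdsIter i (n + 1) ⁻¹' A) ∂P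
        = ∫⁻ i, G (i 0, fun k => i (k + 1)) ∂P := by
          simp only [G, preimage_preimage, ← rdsIter_succ']
      _ = ∫⁻ p, G p ∂(μ.prod P) := by
          rw [← hP.map_head_tail, lintegral_map hG (by fun_prop)]
      _ = ∫⁻ j, ∫⁻ g, G (g, j) ∂μ ∂P := lintegral_prod_symm _ hG.aemeasurable
      _ = ∫⁻ j, ρ (rdsIter j n ⁻¹' A) ∂P := by
          refine lintegral_congr fun j => (hρ (rdsIter j n ⁻¹' A) ?_).symm
          exact ((continuous_rdsIter n).comp (Continuous.prodMk_right j)).measurable hA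
      _ = ρ A := ih

theorem mapsTo_support [IsFiniteMeasure ρ] (hρ : IsStationaryRDS μ ρ) {f : C(M, M)}
    (hf : f ∈ measSupp μ) : MapsTo f ρ.support ρ.support := by
  intro y hy
  by_contra hfy
  have hnull : ∀ᵐ g : C(M, M) ∂μ, ρ (g ⁻¹' ρ.supportᶜ) = 0 := by
    refine (lintegral_eq_zero_iff (measurable_measure_preimage ρ
      Measure.isOpen_compl_support.measurableSet)).1 ?_
    rw [← hρ _ Measure.isOpen_compl_support.measurableSet, Measure.measure_compl_support]
  obtain ⟨V, hV, W, hW, hVW⟩ := mem_nhds_prod_iff.1 <|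
    continuous_eval.continuousAt (x := (f, y)) (Measure.isOpen_compl_support.mem_nhds hfy)
  have hW_pos : 0 < ρ W := (Measure.mem_support_iff_forall y).1 hy W hW
  refine (measure_pos_of_mem_measSupp hf hV).ne' (measure_mono_null (fun g hg => ?_)
    (ae_iff.1 hnull))
  exact fun hg0 => hW_pos.ne' (measure_mono_null (fun z hz => hVW (mk_mem_prod hg hz)) hg0)

theorem measure_ball_pos [IsFiniteMeasure ρ] (hρ : IsStationaryRDS μ ρ) (hρ0 : ρ ≠ 0)
    (hProx : PropP μ) {x₀ : M} (hfix : ∀ f ∈ measSupp μ, f x₀ = x₀) {ε : ℝ} (hε : 0 < ε) :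
    0 < ρ (ball x₀ ε) := by
  obtain ⟨y, hy⟩ := Measure.nonempty_support hρ0
  obtain ⟨i, hi, φ, -, hlim⟩ := hProx y x₀
  obtain ⟨k, hk⟩ := (hlim.eventually (gt_mem_nhds hε)).exists
  rw [rdsIter_eq_self (fun n => hfix _ (hi n))] at hk
  exact (Measure.mem_support_iff_forall _).1
    (rdsIter_mapsTo (fun n => hρ.mapsTo_support (hi n)) _ hy) _ (isOpen_ball.mem_nhds hk)

theorem measure_closedBall_mul_le [IsProbabilityMeasure μ] [IsFiniteMeasure ρ]
    (hρ : IsStationaryRDS μ ρ) {P : Measure (ℕ → C(M, M))} (hP : IsProductMeasure μ P) {q : ℝ}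
    (hq₀ : 0 ≤ q) (hq₁ : q < 1) (x₀ : M) (ε : ℝ) :
    ρ (closedBall x₀ ε) * P (contractingPaths x₀ q ε) ≤ ρ {x₀} := by
  have hbound : ∀ n : ℕ, ρ (closedBall x₀ ε) * P (contractingPaths x₀ q ε)
      ≤ ρ (closedBall x₀ (q ^ n)) := fun n => calc
    _ = ∫⁻ i, (contractingPaths x₀ q ε).indicator (fun _ => ρ (closedBall x₀ ε)) i ∂P :=
        (lintegral_indicator_const (isClosed_contractingPaths x₀ q ε).measurableSet _).symm
    _ ≤ ∫⁻ i, ρ (rdsIter i n ⁻¹' closedBall x₀ (q ^ n)) ∂P :=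
        lintegral_mono (indicator_le fun i hi => measure_mono (hi n))
    _ = ρ (closedBall x₀ (q ^ n)) := hρ.lintegral_rdsIter hP measurableSet_closedBall n
  have hlim : Tendsto (fun n : ℕ => ρ (closedBall x₀ (q ^ n))) atTop (𝓝 (ρ {x₀})) := by
    refine ((tendsto_measure_cthickening_of_isClosed ⟨1, one_pos, measure_ne_top ρ _⟩
      isClosed_singleton).comp (tendsto_pow_atTop_nhds_zero_of_lt_one hq₀ hq₁)).congr
      fun n => ?_
    simp [cthickening_singleton x₀ (pow_nonneg hq₀ n)]
  exact ge_of_tendsto' hlim hbound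

theorem measure_singleton_pos [IsProbabilityMeasure μ] [IsFiniteMeasure ρ]
    (hρ : IsStationaryRDS μ ρ) (hρ0 : ρ ≠ 0) {P : Measure (ℕ → C(M, M))}
    (hP : IsProductMeasure μ P) {q : ℝ} (hq₀ : 0 ≤ q) (hq₁ : q < 1) (hProx : PropP μ)
    (hLC : PropLC P q) {x₀ : M} (hfix : ∀ f ∈ measSupp μ, f x₀ = x₀) : 0 < ρ {x₀} := by
  obtain ⟨ε, hε, hP_pos⟩ := hLC.exists_measure_contractingPaths_ne_zero hP
    ((ae_mem_measSupp μ).mono hfix)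
  have hball : ρ (closedBall x₀ ε) ≠ 0 :=
    ((hρ.measure_ball_pos hρ0 hProx hfix hε).trans_le (measure_mono ball_subset_closedBall)).ne'
  exact (ENNReal.mul_pos hball hP_pos).trans_le (hρ.measure_closedBall_mul_le hP hq₀ hq₁ x₀ ε)

end IsStationaryRDS

theorem stmt2 {M : Type*} [MetricSpace M] [CompactSpace M]
    [MeasurableSpace M] [BorelSpace M]
    [MeasurableSpace C(M, M)] [BorelSpace C(M, M)]
    (μ : Measure C(M, M)) [IsProbabilityMeasure μ]
    (P : Measure (ℕ → C(M, M))) (hP : IsProductMeasure μ P)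
    (q : ℝ) (hq : q ∈ Set.Ioo (0 : ℝ) 1)
    (hProx : PropP μ) (hLC : PropLC P q)
    (ν : Measure M) (hν : IsProbabilityMeasure ν) (hsta : IsStationaryRDS μ ν)
    (hinj : ∀ f : C(M, M), f ∈ measSupp μ → Function.Injective f) :
    (∃ x₀ : M, ν = Measure.dirac x₀ ∧ ∀ᵐ f ∂μ, f x₀ = x₀) ∨
    (∀ x : M, ν {x} = 0) := by
  by_cases hatom : ∀ x : M, ν {x} = 0
  · exact Or.inr hatom
  obtain ⟨x₀, hfix⟩ := hsta.exists_fixedPoint_of_atom hProx hinj (not_forall.1 hatom)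
  have hfix_ae : ∀ᵐ f : C(M, M) ∂μ, f x₀ = x₀ := (ae_mem_measSupp μ).mono hfix
  have hcompl : ν {x₀}ᶜ = 0 := by
    by_contra hne
    have hpos := (hsta.restrict_compl_singleton (((ae_mem_measSupp μ).mono hinj).and hfix_ae))
      |>.measure_singleton_pos (Measure.restrict_eq_zero.not.2 hne) hP hq.1.le hq.2 hProx hLC hfix
    simp [Measure.restrict_apply (measurableSet_singleton x₀)] at hpos
  refine Or.inl ⟨x₀, ?_, hfix_ae⟩
  calc ν = ν.restrict {x₀} := (Measure.restrict_eq_self_of_ae_mem (ae_iff.2 hcompl)).symm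
    _ = Measure.dirac x₀ := by
      rw [Measure.restrict_singleton,
        (prob_compl_eq_zero_iff (measurableSet_singleton x₀)).1 hcompl, one_smul]
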